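/- Let A be a finite dimensional central simple algebra with 1 over a field F and let σ, τ be nonzero F-algebra endomorphisms of A. Then every F-linear (σ,τ)-derivation δ of A is (σ,τ)-inner: there exists u ∈ A such that δ(a) = uτ(a) − σ(a)u for all a ∈ A. -/

import Mathlib

/-!
The sandwich map `A ⊗ Aᵐᵒᵖ → End_F A`, `x ⊗ y ↦ (z ↦ x z y)`, is injective for a central
simple algebra: a minimal relation `∑ aᵢ z bᵢ = 0` with `(bᵢ)` independent can be normalised
to have a coefficient `1`; its commutators with any `z` form a shorter relation and hence
vanish, so all `aᵢ` are central scalars, contradicting independence. Counting dimensions, the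
map is bijective, so some `e = ∑ xᵢ ⊗ yᵢ` acts as `z ↦ φ(z) • 1` for a functional `φ` with
`φ 1 = 1`. This endomorphism has central values, so `(a ⊗ 1) e = (1 ⊗ a) e`, and then
`u = ∑ δ(xᵢ) τ(yᵢ)` satisfies `δ a = u τ(a) - σ(a) u`: expand `δ (a xᵢ) τ(yᵢ)` with the
twisted Leibniz rule.
-/

open scoped TensorProduct
open MulOpposite

section Sandwich

variable {A ι : Type*} [Ring A] {b : ι → A} {s : Finset ι}

lemma sum_commutator_mul_mul_eq_zero {a : ι → A} (ha : ∀ x, ∑ i ∈ s, a i * x * b i = 0)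
    (z x : A) :
    ∑ i ∈ s, (z * a i - a i * z) * x * b i = 0 := by
  simp only [sub_mul, Finset.sum_sub_distrib, mul_assoc, ← Finset.mul_sum]
  simpa [← mul_assoc, ha] using ha (z * x)

variable [IsSimpleRing A]

lemma exists_sum_mul_mul_eq_zero_of_ne_zero {a : ι → A}
    (ha : ∀ x, ∑ i ∈ s, a i * x * b i = 0) {j : ι} (haj : a j ≠ 0) :
    ∃ a' : ι → A, (∀ x, ∑ i ∈ s, a' i * x * b i = 0) ∧ a' j = 1 := by
  let I : TwoSidedIdeal A :=
    .mk' {r | ∃ a' : ι → A, (∀ x, ∑ i ∈ s, a' i * x * b i = 0) ∧ a' j = r}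
    ⟨0, by simp, rfl⟩
    (by
      rintro _ _ ⟨a₁, h₁, rfl⟩ ⟨a₂, h₂, rfl⟩
      exact ⟨a₁ + a₂, fun x ↦ by simp [add_mul, Finset.sum_add_distrib, h₁, h₂], rfl⟩)
    (by
      rintro _ ⟨a', h', rfl⟩
      exact ⟨-a', fun x ↦ by simp [h'], rfl⟩)
    (by
      rintro y _ ⟨a', h', rfl⟩
      exact ⟨fun i ↦ y * a' i, fun x ↦ by
        simpa [mul_assoc, ← Finset.mul_sum] using congr_arg (y * ·) (h' x), rfl⟩)
    (by
      rintro _ y ⟨a', h', rfl⟩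
      exact ⟨fun i ↦ a' i * y, fun x ↦ by simpa [mul_assoc] using h' (y * x), rfl⟩)
  have haI : a j ∈ I := (TwoSidedIdeal.mem_mk' ..).2 ⟨a, ha, rfl⟩
  have h1I : (1 : A) ∈ I := IsSimpleRing.one_mem_of_ne_zero_mem I haj haI
  rwa [TwoSidedIdeal.mem_mk'] at h1I

variable {F : Type*} [Field F] [Algebra F A] [Algebra.IsCentral F A]

theorem eq_zero_of_forall_sum_mul_mul_eq_zero (hb : LinearIndependent F b)
    {a : ι → A} (ha : ∀ x, ∑ i ∈ s, a i * x * b i = 0) : ∀ i ∈ s, a i = 0 := by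
  classical
  induction s using Finset.strongInduction generalizing a with | H s ih =>
  intro j hj
  by_contra haj
  obtain ⟨a', ha', ha'j⟩ := exists_sum_mul_mul_eq_zero_of_ne_zero ha haj
  -- the commutators `[z, a' i]` form a relation with `j`-th coefficient `0`, hence vanish
  have hcomm : ∀ z, ∀ i ∈ s, z * a' i = a' i * z := by
    intro z i hi
    obtain rfl | hij := eq_or_ne i j
    · simp [ha'j]
    refine sub_eq_zero.1 <| ih (s.erase j) (Finset.erase_ssubset hj)
      (a := fun i ↦ z * a' i - a' i * z) (fun x ↦ ?_) i (Finset.mem_erase.2 ⟨hij, hi⟩)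
    rw [Finset.sum_erase _ (by simp [ha'j])]
    exact sum_commutator_mul_mul_eq_zero ha' z x
  have hscalar : ∀ i ∈ s, ∃ r : F, a' i = algebraMap F A r := fun i hi ↦
    (Algebra.IsCentral.mem_center_iff F).1 (Subalgebra.mem_center_iff.2 fun z ↦ hcomm z i hi)
  choose! r hr using hscalar
  have hr0 : ∑ i ∈ s, r i • b i = 0 := by
    rw [← ha' 1]
    exact Finset.sum_congr rfl fun i hi ↦ by rw [Algebra.smul_def, ← hr i hi, mul_one]
  have : (1 : A) = 0 := by
    rw [← ha'j, hr j hj, linearIndependent_iff'.1 hb s r hr0 j hj, map_zero]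
  exact one_ne_zero this

end Sandwich

section CentralSimple

variable {F A : Type*} [Field F] [Ring A] [Algebra F A]

theorem AlgHom.mulLeftRight_injective [Algebra.IsCentral F A] [IsSimpleRing A] :
    Function.Injective (AlgHom.mulLeftRight F A) := by
  rw [injective_iff_map_eq_zero]
  intro t ht
  let b := Module.Free.chooseBasis F A
  obtain ⟨c, rfl⟩ := TensorProduct.eq_repr_basis_right b.mulOpposite t
  have hc : ∀ x, ∑ i ∈ c.support, c i * x * b i = 0 := fun x ↦ by
    simpa [Finsupp.sum, map_sum] using LinearMap.congr_fun ht x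
  have hc0 : c = 0 := Finsupp.ext fun i ↦ by
    by_cases hi : i ∈ c.support
    · exact eq_zero_of_forall_sum_mul_mul_eq_zero b.linearIndependent hc i hi
    · exact Finsupp.notMem_support_iff.1 hi
  simp [hc0]

theorem IsAzumaya.of_isCentral_of_isSimpleRing [Algebra.IsCentral F A] [IsSimpleRing A]
    [FiniteDimensional F A] : IsAzumaya F A where
  bij := by
    have hdim : Module.finrank F (A ⊗[F] Aᵐᵒᵖ) = Module.finrank F (Module.End F A) := by
      rw [Module.finrank_tensorProduct, Module.finrank_linearMap,
        (opLinearEquiv F : A ≃ₗ[F] Aᵐᵒᵖ).finrank_eq]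
    exact ⟨AlgHom.mulLeftRight_injective,
      (LinearMap.injective_iff_surjective_of_finrank_eq_finrank hdim
        (f := (AlgHom.mulLeftRight F A).toLinearMap)).1 AlgHom.mulLeftRight_injective⟩

theorem IsAzumaya.exists_separabilityElement [IsAzumaya F A] :
    ∃ e : A ⊗[F] Aᵐᵒᵖ, AlgHom.mulLeftRight F A e 1 = 1 ∧
      ∀ a : A, (a ⊗ₜ 1) * e = (1 ⊗ₜ op a) * e := by
  have : Nontrivial A := (FaithfulSMul.algebraMap_injective F A).nontrivial
  obtain ⟨φ, hφ⟩ := Module.Projective.exists_dual_eq_one F (one_ne_zero : (1 : A) ≠ 0)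
  -- `e` acts as `x ↦ φ x • 1`, whose values are central
  obtain ⟨e, he⟩ := IsAzumaya.bij.2 (φ.smulRight (1 : A))
  refine ⟨e, by simp [he, hφ], fun a ↦ IsAzumaya.bij.1 ?_⟩
  ext x
  simp [he, Module.End.mul_apply]

section Derivation

variable {B : Type*} [Ring B] [Algebra F B]

def derivTensorLift (δ : A →ₗ[F] B) (τ : A →ₐ[F] B) : A ⊗[F] Aᵐᵒᵖ →ₗ[F] B :=
  TensorProduct.lift <| (LinearMap.mul F B).compl₁₂ δ
    (τ.toLinearMap ∘ₗ (opLinearEquiv F : A ≃ₗ[F] Aᵐᵒᵖ).symm.toLinearMap)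

@[simp]
lemma derivTensorLift_tmul (δ : A →ₗ[F] B) (τ : A →ₐ[F] B) (x : A) (y : Aᵐᵒᵖ) :
    derivTensorLift δ τ (x ⊗ₜ y) = δ x * τ y.unop :=
  rfl

lemma derivTensorLift_one_tmul_mul (δ : A →ₗ[F] B) (τ : A →ₐ[F] B) (a : A)
    (t : A ⊗[F] Aᵐᵒᵖ) :
    derivTensorLift δ τ ((1 ⊗ₜ op a) * t) = derivTensorLift δ τ t * τ a := by
  induction t using TensorProduct.induction_on with
  | zero => simp
  | tmul x y => simp [mul_assoc]
  | add t t' ht ht' => simp [mul_add, add_mul, ht, ht']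

variable {σ τ : A →ₐ[F] B} {δ : A →ₗ[F] B}

lemma derivTensorLift_tmul_one_mul (hδ : ∀ a b, δ (a * b) = δ a * τ b + σ a * δ b) (a : A)
    (t : A ⊗[F] Aᵐᵒᵖ) :
    derivTensorLift δ τ ((a ⊗ₜ 1) * t) =
      δ a * τ (AlgHom.mulLeftRight F A t 1) + σ a * derivTensorLift δ τ t := by
  induction t using TensorProduct.induction_on with
  | zero => simp
  | tmul x y => simp [hδ, add_mul, mul_assoc]
  | add t t' ht ht' => simp only [mul_add, map_add, LinearMap.add_apply, ht, ht']; abel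

theorem exists_eq_mul_sub_mul_of_separabilityElement
    (hδ : ∀ a b, δ (a * b) = δ a * τ b + σ a * δ b) {e : A ⊗[F] Aᵐᵒᵖ}
    (he₁ : AlgHom.mulLeftRight F A e 1 = 1) (he : ∀ a : A, (a ⊗ₜ 1) * e = (1 ⊗ₜ op a) * e) :
    ∃ u : B, ∀ a : A, δ a = u * τ a - σ a * u := by
  refine ⟨derivTensorLift δ τ e, fun a ↦ eq_sub_of_add_eq ?_⟩
  have := derivTensorLift_tmul_one_mul hδ a e
  rwa [he, derivTensorLift_one_tmul_mul, he₁, map_one, mul_one, eq_comm] at this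

end Derivation

end CentralSimple

theorem stmt_8_general {F A : Type*} [Field F] [Ring A] [Algebra F A]
    [Algebra.IsCentral F A] [IsSimpleRing A] [FiniteDimensional F A]
    (σ τ : A →ₐ[F] A)
    (δ : A →ₗ[F] A)
    (hδ : ∀ a b : A, δ (a * b) = δ a * τ b + σ a * δ b) :
    ∃ u : A, ∀ a : A, δ a = u * τ a - σ a * u := by
  have : IsAzumaya F A := .of_isCentral_of_isSimpleRing
  obtain ⟨e, he₁, he⟩ := IsAzumaya.exists_separabilityElement (F := F) (A := A)
  exact exists_eq_mul_sub_mul_of_separabilityElement hδ he₁ he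

theorem stmt_8 {F A : Type*} [Field F] [Ring A] [Algebra F A]
    [Algebra.IsCentral F A] [IsSimpleRing A] [FiniteDimensional F A]
    (σ τ : A →ₐ[F] A) (hσ : ⇑σ ≠ 0) (hτ : ⇑τ ≠ 0)
    (δ : A →ₗ[F] A)
    (hδ : ∀ a b : A, δ (a * b) = δ a * τ b + σ a * δ b) :
    ∃ u : A, ∀ a : A, δ a = u * τ a - σ a * u :=
  stmt_8_general σ τ δ hδ
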